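/- Let η ≥ 0 and v be measurable on ℝⁿ × [0,∞), radial in x, satisfying for all 0 < R₁ < R₂ and a.e. t: (1/2) d/dt ∫_{R₁≤|x|≤R₂} η² dⁿx = c_n (R₂^{n−1} η²(R₂,t) v(R₂,t) − R₁^{n−1} η²(R₁,t) v(R₁,t)), where η²(R,t)v(R,t) ≥ 0 for all R, t (incoming wave condition with inward normal), and sup_t ∫ η²(·,t) dⁿx = ‖ψ₀‖₂² < ∞. Then for each R, the function t ↦ η²(R,t)v(R,t) is in L¹([0,∞)) with ∫₀^∞ η²(R,t) v(R,t) dt ≤ (1/2)‖ψ₀‖₂², uniformly in R. -/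

import Mathlib

/-! With `R₁ = 0` the local mass identity says that the mass `m R` in the ball of radius `R` has
time derivative `2 c R^{n-1} η² v`, which is nonnegative by the incoming wave condition. So
`m R` is nondecreasing on `[0, ∞)` and, being bounded by `m₀`, converges as `t → ∞` to a limit
`l ≤ m₀`. The improper fundamental theorem of calculus for a nonnegative derivative then gives
integrability of the flux together with `2 c R^{n-1} ∫₀^∞ η² v dt = l - m R 0 ≤ m₀`. -/

open MeasureTheory Filter Set Topology

theorem MonotoneOn.tendsto_atTop_ciSup_Ici {α β : Type*} [Preorder α] [IsDirectedOrder α]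
    [ConditionallyCompleteLinearOrder β] [TopologicalSpace β] [OrderTopology β]
    {f : α → β} {a : α} (hf : MonotoneOn f (Ici a)) (hbdd : BddAbove (f '' Ici a)) :
    Tendsto f atTop (𝓝 (⨆ x : Ici a, f x)) := by
  rw [← tendsto_comp_val_Ici_atTop]
  refine tendsto_atTop_ciSup (fun x y hxy => hf x.2 y.2 hxy) ?_
  rwa [← image_eq_range]

theorem exists_le_tendsto_atTop_of_hasDerivAt_nonneg {F F' : ℝ → ℝ} {a M : ℝ}
    (hderiv : ∀ x ∈ Ici a, HasDerivAt F (F' x) x) (hF' : ∀ x ∈ Ici a, 0 ≤ F' x)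
    (hle : ∀ x ∈ Ici a, F x ≤ M) :
    ∃ l ≤ M, Tendsto F atTop (𝓝 l) := by
  have hmono : MonotoneOn F (Ici a) := by
    refine monotoneOn_of_hasDerivWithinAt_nonneg (f' := F') (convex_Ici a)
      (fun x hx => (hderiv x hx).continuousAt.continuousWithinAt) (fun x hx => ?_) fun x hx => ?_
    all_goals rw [interior_Ici] at hx
    · exact (hderiv x hx.out.le).hasDerivWithinAt
    · exact hF' x hx.out.le
  have hbdd : BddAbove (F '' Ici a) := ⟨M, forall_mem_image.2 hle⟩
  have : Nonempty (Ici a) := ⟨⟨a, self_mem_Ici⟩⟩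
  exact ⟨_, ciSup_le fun x : Ici a => hle x x.2, hmono.tendsto_atTop_ciSup_Ici hbdd⟩

theorem local_flux_integrable_general (n : ℕ) (hn : 2 ≤ n) (c m₀ : ℝ) (hc : 0 < c)
    (η v : ℝ → ℝ → ℝ)  -- arguments: radius `R`, time `t`
    (m : ℝ → ℝ → ℝ)    -- `m R t` : mass in the ball of radius `R` at time `t`
    (hm0 : ∀ t : ℝ, m 0 t = 0)
    (hmbd : ∀ R t : ℝ, 0 ≤ t → 0 ≤ m R t ∧ m R t ≤ m₀)
    (hIWC : ∀ R t : ℝ, 0 ≤ η R t ^ 2 * v R t)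
    (hderiv : ∀ R₁ R₂ : ℝ, 0 ≤ R₁ → R₁ < R₂ → ∀ t : ℝ, 0 ≤ t →
      HasDerivAt (fun τ => m R₂ τ - m R₁ τ)
        (2 * c * (R₂ ^ (n - 1) * η R₂ t ^ 2 * v R₂ t -
                  R₁ ^ (n - 1) * η R₁ t ^ 2 * v R₁ t)) t) :
    ∀ R : ℝ, 0 < R →
      IntegrableOn (fun t => η R t ^ 2 * v R t) (Set.Ici 0) volume ∧
      c * R ^ (n - 1) * (∫ t in Set.Ici (0:ℝ), η R t ^ 2 * v R t) ≤ (1 / 2) * m₀ := by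
  intro R hR
  have hk : 0 < 2 * c * R ^ (n - 1) := by positivity
  have hmass : ∀ t ∈ Ici (0 : ℝ),
      HasDerivAt (m R) (2 * c * R ^ (n - 1) * (η R t ^ 2 * v R t)) t := fun t ht => by
    convert hderiv 0 R le_rfl hR t ht using 1
    · simp only [hm0, sub_zero]
    · rw [zero_pow (by omega)]
      ring
  have hflux : ∀ t ∈ Ici (0 : ℝ), 0 ≤ 2 * c * R ^ (n - 1) * (η R t ^ 2 * v R t) :=
    fun t _ => mul_nonneg hk.le (hIWC R t)
  obtain ⟨l, hl, hlim⟩ :=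
    exists_le_tendsto_atTop_of_hasDerivAt_nonneg hmass hflux fun t ht => (hmbd R t ht).2
  have hint := integrableOn_Ioi_deriv_of_nonneg' hmass (fun t ht => hflux t ht.out.le) hlim
  have hval := integral_Ioi_of_hasDerivAt_of_nonneg' hmass (fun t ht => hflux t ht.out.le) hlim
  rw [integrableOn_Ici_iff_integrableOn_Ioi, integral_Ici_eq_integral_Ioi]
  rw [IntegrableOn, integrable_const_mul_iff hk.ne'.isUnit] at hint
  rw [integral_const_mul] at hval
  have hmass_init := (hmbd R 0 le_rfl).1
  exact ⟨hint, by linarith⟩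

/-- Local flux integrability (Lemma 2.4): for radial `η, v`, with `m R t` the mass
`∫_{|x|≤R} η² dⁿx` (nonnegative, bounded by the conserved total mass `m₀ = ‖ψ₀‖₂²`),
satisfying the local mass identity
`(1/2) d/dt (m R₂ - m R₁) = c (R₂^{n-1} η²(R₂,t) v(R₂,t) - R₁^{n-1} η²(R₁,t) v(R₁,t))`
and the incoming wave condition `η² v ≥ 0`, the flux `t ↦ η²(R,t) v(R,t)` is in
`L¹([0,∞))` for each `R > 0`, with `c R^{n-1} ∫₀^∞ η² v dt ≤ (1/2) m₀` uniformly in `R`. -/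
theorem local_flux_integrable (n : ℕ) (hn : 2 ≤ n) (c m₀ : ℝ) (hc : 0 < c) (hm₀ : 0 ≤ m₀)
    (η v : ℝ → ℝ → ℝ)  -- arguments: radius `R`, time `t`
    (m : ℝ → ℝ → ℝ)    -- `m R t` : mass in the ball of radius `R` at time `t`
    (hm0 : ∀ t : ℝ, m 0 t = 0)
    (hmbd : ∀ R t : ℝ, 0 ≤ t → 0 ≤ m R t ∧ m R t ≤ m₀)
    (hIWC : ∀ R t : ℝ, 0 ≤ η R t ^ 2 * v R t)
    (hderiv : ∀ R₁ R₂ : ℝ, 0 ≤ R₁ → R₁ < R₂ → ∀ t : ℝ, 0 ≤ t →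
      HasDerivAt (fun τ => m R₂ τ - m R₁ τ)
        (2 * c * (R₂ ^ (n - 1) * η R₂ t ^ 2 * v R₂ t -
                  R₁ ^ (n - 1) * η R₁ t ^ 2 * v R₁ t)) t) :
    ∀ R : ℝ, 0 < R →
      IntegrableOn (fun t => η R t ^ 2 * v R t) (Set.Ici 0) volume ∧
      c * R ^ (n - 1) * (∫ t in Set.Ici (0:ℝ), η R t ^ 2 * v R t) ≤ (1 / 2) * m₀ :=
  local_flux_integrable_general n hn c m₀ hc η v m hm0 hmbd hIWC hderiv
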